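/- arXiv:math/0006057 — 2 statements merged into one kernel-verified Lean document; each statement's English description precedes it below -/
import Mathlib

section
/- An element l of a weak Hopf algebra H is a left integral (i.e., hl = ε_t(h)l for all h ∈ H) if and only if (1 ⊗ h)Δ(l) = (S(h) ⊗ 1)Δ(l) for all h ∈ H. -/
set_option synthInstance.maxHeartbeats 400000


open TensorProduct

/-- A (finite) quantum groupoid / weak Hopf algebra over `k` (Böhm–Nill–Szlachányi). -/
structure WeakHopfAlgebra (k : Type*) (H : Type*) [CommRing k] [Ring H] [Algebra k H] where
  comul : H →ₗ[k] H ⊗[k] H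
  counit : H →ₗ[k] k
  antipode : H →ₗ[k] H
  coassoc : ∀ h : H,
    (TensorProduct.assoc k H H H) ((LinearMap.rTensor H comul) (comul h)) =
      (LinearMap.lTensor H comul) (comul h)
  counit_lid : ∀ h : H,
    (TensorProduct.lid k H) ((LinearMap.rTensor H counit) (comul h)) = h
  counit_rid : ∀ h : H,
    (TensorProduct.rid k H) ((LinearMap.lTensor H counit) (comul h)) = h
  comul_mul : ∀ a b : H, comul (a * b) = comul a * comul b
  weak_comul_one_left :
    (LinearMap.lTensor H comul) (comul 1) =
      (TensorProduct.assoc k H H H) (comul 1 ⊗ₜ[k] (1 : H)) * ((1 : H) ⊗ₜ[k] comul 1)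
  weak_comul_one_right :
    (LinearMap.lTensor H comul) (comul 1) =
      ((1 : H) ⊗ₜ[k] comul 1) * (TensorProduct.assoc k H H H) (comul 1 ⊗ₜ[k] (1 : H))
  weak_counit_left : ∀ f g h : H,
    counit (f * g * h) =
      (LinearMap.mul' k k)
        ((TensorProduct.map (counit ∘ₗ LinearMap.mulLeft k f)
          (counit ∘ₗ LinearMap.mulRight k h)) (comul g))
  weak_counit_right : ∀ f g h : H,
    counit (f * g * h) =
      (LinearMap.mul' k k)
        ((TensorProduct.map (counit ∘ₗ LinearMap.mulLeft k f)
          (counit ∘ₗ LinearMap.mulRight k h)) ((TensorProduct.comm k H H) (comul g)))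
  antipode_right : ∀ h : H,
    (LinearMap.mul' k H) ((LinearMap.lTensor H antipode) (comul h)) =
      (TensorProduct.lid k H) ((LinearMap.rTensor H counit) (comul 1 * (h ⊗ₜ[k] (1 : H))))
  antipode_left : ∀ h : H,
    (LinearMap.mul' k H) ((LinearMap.rTensor H antipode) (comul h)) =
      (TensorProduct.rid k H) ((LinearMap.lTensor H counit) (((1 : H) ⊗ₜ[k] h) * comul 1))
  antipode_conv : ∀ h : H,
    (LinearMap.mul' k H)
      ((TensorProduct.map ((LinearMap.mul' k H) ∘ₗ (LinearMap.rTensor H antipode) ∘ₗ comul)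
        antipode) (comul h)) = antipode h

namespace WeakHopfAlgebra

variable {k H : Type*} [CommRing k] [Ring H] [Algebra k H] (W : WeakHopfAlgebra k H)

/-- The target counital map `ε_t(h) = ε(1₍₁₎h)1₍₂₎`. -/
noncomputable def εt : H →ₗ[k] H :=
  (TensorProduct.lid k H).toLinearMap ∘ₗ (LinearMap.rTensor H W.counit) ∘ₗ
    (LinearMap.mulLeft k (W.comul 1)) ∘ₗ ((TensorProduct.mk k H H).flip 1)

/-- The source counital map `ε_s(h) = 1₍₁₎ε(h1₍₂₎)`. -/
noncomputable def εs : H →ₗ[k] H :=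
  (TensorProduct.rid k H).toLinearMap ∘ₗ (LinearMap.lTensor H W.counit) ∘ₗ
    (LinearMap.mulRight k (W.comul 1)) ∘ₗ (TensorProduct.mk k H H 1)

end WeakHopfAlgebra

namespace WeakHopfAlgebraAux

open LinearMap

variable {k H : Type*} [CommRing k] [Ring H] [Algebra k H] (W : WeakHopfAlgebra k H)

lemma comul_one_mul (x : H) : W.comul x = W.comul 1 * W.comul x := by
  rw [← W.comul_mul, one_mul]

lemma comul_mul_one (x : H) : W.comul x = W.comul x * W.comul 1 := by
  rw [← W.comul_mul, mul_one]

lemma εt_apply (h : H) :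
    W.εt h = TensorProduct.lid k H ((rTensor H W.counit) (W.comul 1 * (h ⊗ₜ[k] (1 : H)))) := rfl

lemma εs_apply (h : H) :
    W.εs h = TensorProduct.rid k H ((lTensor H W.counit) (((1 : H) ⊗ₜ[k] h) * W.comul 1)) := rfl

lemma antipode_mul_right (h : H) :
    mul' k H (lTensor H W.antipode (W.comul h)) = W.εt h := by
  rw [W.antipode_right, εt_apply]

lemma antipode_mul_left (h : H) :
    mul' k H (rTensor H W.antipode (W.comul h)) = W.εs h := by
  rw [W.antipode_left, εs_apply]

lemma εt_eq : W.εt = mul' k H ∘ₗ lTensor H W.antipode ∘ₗ W.comul :=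
  LinearMap.ext fun h => (antipode_mul_right W h).symm

lemma εs_eq : W.εs = mul' k H ∘ₗ rTensor H W.antipode ∘ₗ W.comul :=
  LinearMap.ext fun h => (antipode_mul_left W h).symm

/-- `f0 (x ⊗ y) = ε(x) • y`. -/
noncomputable def f0 : H ⊗[k] H →ₗ[k] H :=
  (TensorProduct.lid k H).toLinearMap ∘ₗ rTensor H W.counit

@[simp] lemma f0_tmul (x y : H) : f0 W (x ⊗ₜ[k] y) = W.counit x • y := by
  simp [f0]

/-- `P1 (x ⊗ (y ⊗ z)) = x ⊗ ε(y) • z`. -/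
noncomputable def P1 : H ⊗[k] (H ⊗[k] H) →ₗ[k] H ⊗[k] H := lTensor H (f0 W)

/-- Identity (I3): `ε_s(h₁) ⊗ h₂ = (1 ⊗ h)Δ(1)`. -/
lemma I3 (h : H) :
    rTensor H W.εs (W.comul h) = ((1 : H) ⊗ₜ[k] h) * W.comul 1 := by
  have key : ∀ (v : H ⊗[k] H) (x y : H),
      P1 W (((1 : H) ⊗ₜ[k] (x ⊗ₜ[k] y)) * (TensorProduct.assoc k H H H) (v ⊗ₜ[k] (1 : H)))
        = (TensorProduct.rid k H ((lTensor H W.counit) (((1 : H) ⊗ₜ[k] x) * v))) ⊗ₜ[k] y := by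
    intro v x y
    induction v using TensorProduct.induction_on with
    | zero => simp
    | tmul a b =>
        simp [P1, Algebra.TensorProduct.tmul_mul_tmul, smul_tmul']
    | add u v hu hv => simp [tmul_add, mul_add, hu, hv, add_tmul]
  have h1 : ∀ w : H ⊗[k] H,
      rTensor H W.εs w
        = P1 W (((1 : H) ⊗ₜ[k] w) * (TensorProduct.assoc k H H H) (W.comul 1 ⊗ₜ[k] (1 : H))) := by
    intro w
    induction w using TensorProduct.induction_on with
    | zero => simp
    | tmul x y => rw [key]; rw [rTensor_tmul, εs_apply]
    | add u v hu hv => simp only [map_add, tmul_add, add_mul] at *; rw [hu, hv]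
  have step1 : ((1 : H) ⊗ₜ[k] W.comul h) * ((1 : H) ⊗ₜ[k] W.comul 1)
      = ((1 : H) ⊗ₜ[k] W.comul h) := by
    rw [Algebra.TensorProduct.tmul_mul_tmul, one_mul, ← comul_mul_one]
  have step2 : ∀ v : H ⊗[k] H,
      ((1 : H) ⊗ₜ[k] W.comul h) * lTensor H W.comul v
        = lTensor H W.comul (((1 : H) ⊗ₜ[k] h) * v) := by
    intro v
    induction v using TensorProduct.induction_on with
    | zero => simp
    | tmul a b =>
        simp only [lTensor_tmul, Algebra.TensorProduct.tmul_mul_tmul, one_mul, ← W.comul_mul]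
    | add u v hu hv => simp only [map_add, mul_add, hu, hv]
  have step3 : ∀ u : H ⊗[k] H, P1 W (lTensor H W.comul u) = u := by
    intro u
    induction u using TensorProduct.induction_on with
    | zero => simp
    | tmul x y =>
        have := W.counit_lid y
        simp only [lTensor_tmul, P1, f0, coe_comp, Function.comp_apply,
          LinearEquiv.coe_coe] at *
        rw [this]
    | add u v hu hv => simp only [map_add, hu, hv]
  calc rTensor H W.εs (W.comul h)
      = P1 W (((1 : H) ⊗ₜ[k] W.comul h)
          * (TensorProduct.assoc k H H H) (W.comul 1 ⊗ₜ[k] (1 : H))) := h1 _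
    _ = P1 W ((((1 : H) ⊗ₜ[k] W.comul h) * ((1 : H) ⊗ₜ[k] W.comul 1))
          * (TensorProduct.assoc k H H H) (W.comul 1 ⊗ₜ[k] (1 : H))) := by rw [step1]
    _ = P1 W (((1 : H) ⊗ₜ[k] W.comul h) * lTensor H W.comul (W.comul 1)) := by
          rw [mul_assoc, ← W.weak_comul_one_right]
    _ = P1 W (lTensor H W.comul (((1 : H) ⊗ₜ[k] h) * W.comul 1)) := by rw [step2]
    _ = ((1 : H) ⊗ₜ[k] h) * W.comul 1 := step3 _

/-- `Phi (x ⊗ y) = (S(x) ⊗ 1) * Δ(y)`. -/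
noncomputable def Phi : H ⊗[k] H →ₗ[k] H ⊗[k] H :=
  mul' k (H ⊗[k] H) ∘ₗ
    TensorProduct.map (((TensorProduct.mk k H H).flip 1) ∘ₗ W.antipode) W.comul

@[simp] lemma Phi_tmul (x y : H) :
    Phi W (x ⊗ₜ[k] y) = (W.antipode x ⊗ₜ[k] (1 : H)) * W.comul y := by
  simp [Phi]

lemma C1 (h : H) :
    rTensor H (mul' k H ∘ₗ rTensor H W.antipode ∘ₗ W.comul) (W.comul h)
      = Phi W (W.comul h) := by
  set g1 : (H ⊗[k] H) ⊗[k] H →ₗ[k] H ⊗[k] H := rTensor H (mul' k H ∘ₗ rTensor H W.antipode)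
    with hg1
  have hco : rTensor H W.comul (W.comul h)
      = (TensorProduct.assoc k H H H).symm (lTensor H W.comul (W.comul h)) := by
    rw [← W.coassoc, LinearEquiv.symm_apply_apply]
  have hR : ∀ w : H ⊗[k] H,
      rTensor H (mul' k H ∘ₗ rTensor H W.antipode ∘ₗ W.comul) w
        = g1 (rTensor H W.comul w) := by
    intro w
    induction w using TensorProduct.induction_on with
    | zero => simp
    | tmul x y => simp [hg1]
    | add u v hu hv => simp only [map_add, hu, hv]
  have inner : ∀ (x : H) (v : H ⊗[k] H),
      g1 ((TensorProduct.assoc k H H H).symm (x ⊗ₜ[k] v))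
        = (W.antipode x ⊗ₜ[k] (1 : H)) * v := by
    intro x v
    induction v using TensorProduct.induction_on with
    | zero => simp
    | tmul a b => simp [hg1, Algebra.TensorProduct.tmul_mul_tmul]
    | add u v hu hv => simp only [tmul_add, map_add, mul_add, hu, hv]
  have hL : ∀ w : H ⊗[k] H,
      Phi W w = g1 ((TensorProduct.assoc k H H H).symm (lTensor H W.comul w)) := by
    intro w
    induction w using TensorProduct.induction_on with
    | zero => simp
    | tmul x y => rw [Phi_tmul, lTensor_tmul, inner]
    | add u v hu hv => simp only [map_add, hu, hv]
  rw [hR, hco, ← hL]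

/-- `Δ(ε_t(g)) = (ε_t(g) ⊗ 1)Δ(1)`. -/
lemma lemD (g : H) :
    W.comul (W.εt g) = (W.εt g ⊗ₜ[k] (1 : H)) * W.comul 1 := by
  set P0 : H ⊗[k] (H ⊗[k] H) →ₗ[k] H ⊗[k] H :=
    (TensorProduct.lid k (H ⊗[k] H)).toLinearMap ∘ₗ rTensor (H ⊗[k] H) W.counit with hP0
  have d1 : W.εt g = f0 W (W.comul 1 * (g ⊗ₜ[k] (1 : H))) := rfl
  have d2 : ∀ v : H ⊗[k] H, W.comul (f0 W v) = P0 (lTensor H W.comul v) := by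
    intro v
    induction v using TensorProduct.induction_on with
    | zero => simp
    | tmul x y => simp [hP0]
    | add u v hu hv => simp only [map_add, hu, hv]
  have d3 : ∀ v : H ⊗[k] H, lTensor H W.comul (v * (g ⊗ₜ[k] (1 : H)))
      = lTensor H W.comul v * (g ⊗ₜ[k] (1 : H ⊗[k] H)) := by
    intro v
    induction v using TensorProduct.induction_on with
    | zero => simp
    | tmul a b => simp [Algebra.TensorProduct.tmul_mul_tmul]
    | add u v hu hv => simp only [add_mul, map_add, hu, hv]
  have d6 : ∀ (v x : H ⊗[k] H),
      P0 ((TensorProduct.assoc k H H H) (v ⊗ₜ[k] (1 : H)) * (g ⊗ₜ[k] x))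
        = (f0 W (v * (g ⊗ₜ[k] (1 : H))) ⊗ₜ[k] (1 : H)) * x := by
    intro v x
    induction v using TensorProduct.induction_on with
    | zero => simp
    | tmul a b =>
        simp [hP0, Algebra.TensorProduct.tmul_mul_tmul]
        rw [← TensorProduct.smul_tmul', smul_mul_assoc]
    | add u v hu hv => simp only [add_tmul, map_add, add_mul, hu, hv]
  calc W.comul (W.εt g)
      = P0 (lTensor H W.comul (W.comul 1 * (g ⊗ₜ[k] (1 : H)))) := by rw [d1, d2]
    _ = P0 (lTensor H W.comul (W.comul 1) * (g ⊗ₜ[k] (1 : H ⊗[k] H))) := by rw [d3]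
    _ = P0 ((TensorProduct.assoc k H H H) (W.comul 1 ⊗ₜ[k] (1 : H))
          * (((1 : H) ⊗ₜ[k] W.comul 1) * (g ⊗ₜ[k] (1 : H ⊗[k] H)))) := by
          rw [W.weak_comul_one_left, mul_assoc]
    _ = P0 ((TensorProduct.assoc k H H H) (W.comul 1 ⊗ₜ[k] (1 : H))
          * (g ⊗ₜ[k] W.comul 1)) := by
          rw [Algebra.TensorProduct.tmul_mul_tmul, one_mul, mul_one]
    _ = (f0 W (W.comul 1 * (g ⊗ₜ[k] (1 : H))) ⊗ₜ[k] (1 : H)) * W.comul 1 := d6 _ _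
    _ = (W.εt g ⊗ₜ[k] (1 : H)) * W.comul 1 := by rw [← d1]

/-- `S(h₁) ε_t(h₂) = S(h)`. -/
lemma lemE (h : H) :
    mul' k H (TensorProduct.map W.antipode W.εt (W.comul h)) = W.antipode h := by
  set ρ' : H ⊗[k] (H ⊗[k] H) →ₗ[k] H :=
    mul' k H ∘ₗ TensorProduct.map W.antipode (mul' k H ∘ₗ lTensor H W.antipode) with hρ'
  set ρ : (H ⊗[k] H) ⊗[k] H →ₗ[k] H :=
    mul' k H ∘ₗ TensorProduct.map (mul' k H ∘ₗ rTensor H W.antipode) W.antipode with hρ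
  have e3 : ∀ w : H ⊗[k] H,
      mul' k H (TensorProduct.map W.antipode
        (mul' k H ∘ₗ lTensor H W.antipode ∘ₗ W.comul) w) = ρ' (lTensor H W.comul w) := by
    intro w
    induction w using TensorProduct.induction_on with
    | zero => simp
    | tmul x y => simp [hρ']
    | add u v hu hv => simp only [map_add, hu, hv]
  have e1 : ∀ u : (H ⊗[k] H) ⊗[k] H, ρ' ((TensorProduct.assoc k H H H) u) = ρ u := by
    intro u
    induction u using TensorProduct.induction_on with
    | zero => simp
    | tmul w z =>
        induction w using TensorProduct.induction_on with
        | zero => simp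
        | tmul a b => simp [hρ, hρ', mul_assoc]
        | add p q hp hq => simp only [add_tmul, map_add, hp, hq]
    | add p q hp hq => simp only [map_add, hp, hq]
  have e2 : ∀ w : H ⊗[k] H,
      mul' k H (TensorProduct.map (mul' k H ∘ₗ rTensor H W.antipode ∘ₗ W.comul)
        W.antipode w) = ρ (rTensor H W.comul w) := by
    intro w
    induction w using TensorProduct.induction_on with
    | zero => simp
    | tmul x y => simp [hρ]
    | add u v hu hv => simp only [map_add, hu, hv]
  rw [εt_eq, e3, ← W.coassoc h, e1, ← e2, W.antipode_conv]

end WeakHopfAlgebraAux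

/-- `l` is a left integral iff `(1⊗h)Δ(l) = (S(h)⊗1)Δ(l)` for all `h`. -/
theorem WeakHopfAlgebra.left_integral_iff
    {k H : Type*} [Field k] [Ring H] [Algebra k H] [FiniteDimensional k H]
    (W : WeakHopfAlgebra k H) (l : H) :
    (∀ h : H, h * l = W.εt h * l) ↔
      (∀ h : H, ((1 : H) ⊗ₜ[k] h) * W.comul l = (W.antipode h ⊗ₜ[k] (1 : H)) * W.comul l) := by
  open WeakHopfAlgebraAux LinearMap in
  constructor
  · intro int h
    have step4 : ∀ w : H ⊗[k] H,
        Phi W w * W.comul l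
          = ((mul' k H) (TensorProduct.map W.antipode W.εt w) ⊗ₜ[k] (1 : H)) * W.comul l := by
      intro w
      induction w using TensorProduct.induction_on with
      | zero => simp
      | tmul x y =>
          rw [Phi_tmul, TensorProduct.map_tmul, mul'_apply]
          calc (W.antipode x ⊗ₜ[k] (1 : H)) * W.comul y * W.comul l
              = (W.antipode x ⊗ₜ[k] (1 : H)) * W.comul (y * l) := by
                rw [mul_assoc, W.comul_mul]
            _ = (W.antipode x ⊗ₜ[k] (1 : H)) * W.comul (W.εt y * l) := by rw [← int y]
            _ = (W.antipode x ⊗ₜ[k] (1 : H))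
                * ((W.εt y ⊗ₜ[k] (1 : H)) * W.comul 1 * W.comul l) := by
                rw [W.comul_mul, lemD]
            _ = (W.antipode x ⊗ₜ[k] (1 : H)) * ((W.εt y ⊗ₜ[k] (1 : H)) * W.comul l) := by
                rw [mul_assoc (W.εt y ⊗ₜ[k] (1 : H)), ← comul_one_mul]
            _ = ((W.antipode x * W.εt y) ⊗ₜ[k] (1 : H)) * W.comul l := by
                rw [← mul_assoc, Algebra.TensorProduct.tmul_mul_tmul, one_mul]
      | add u v hu hv => simp only [map_add, add_mul, TensorProduct.add_tmul, hu, hv]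
    calc ((1 : H) ⊗ₜ[k] h) * W.comul l
        = (((1 : H) ⊗ₜ[k] h) * W.comul 1) * W.comul l := by
          conv_lhs => rw [comul_one_mul W l, ← mul_assoc]
      _ = rTensor H W.εs (W.comul h) * W.comul l := by rw [I3]
      _ = Phi W (W.comul h) * W.comul l := by rw [εs_eq, C1]
      _ = ((mul' k H) (TensorProduct.map W.antipode W.εt (W.comul h)) ⊗ₜ[k] (1 : H))
            * W.comul l := step4 _
      _ = (W.antipode h ⊗ₜ[k] (1 : H)) * W.comul l := by rw [lemE]
  · intro hyp h
    set R : H ⊗[k] H →ₗ[k] H :=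
      (TensorProduct.rid k H).toLinearMap ∘ₗ lTensor H W.counit with hRdef
    have B2 : ∀ x : H, R (W.comul x) = x := fun x => W.counit_rid x
    have B1 : ∀ (x : H) (w : H ⊗[k] H), R ((x ⊗ₜ[k] (1 : H)) * w) = x * R w := by
      intro x w
      induction w using TensorProduct.induction_on with
      | zero => simp
      | tmul a b =>
          simp [hRdef, Algebra.TensorProduct.tmul_mul_tmul, mul_smul_comm]
      | add u v hu hv => simp only [mul_add, map_add, hu, hv]
    have B3 : ∀ g : H, R (((1 : H) ⊗ₜ[k] g) * W.comul l) = W.antipode g * l := by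
      intro g; rw [hyp g, B1, B2]
    have B5 : ∀ w : H ⊗[k] H,
        R (w * W.comul l) = mul' k H (lTensor H W.antipode w) * l := by
      intro w
      induction w using TensorProduct.induction_on with
      | zero => simp
      | tmul x y =>
          have B4 : ∀ v : H ⊗[k] H, R ((x ⊗ₜ[k] y) * v) = x * R (((1 : H) ⊗ₜ[k] y) * v) := by
            intro v
            induction v using TensorProduct.induction_on with
            | zero => simp
            | tmul a b =>
                simp [hRdef, Algebra.TensorProduct.tmul_mul_tmul, mul_smul_comm]
            | add u v hu hv => simp only [mul_add, map_add, hu, hv]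
          rw [B4, B3, lTensor_tmul, mul'_apply, mul_assoc]
      | add u v hu hv => simp only [add_mul, map_add, hu, hv]
    have key := B5 (W.comul h)
    rw [← W.comul_mul, B2, antipode_mul_right] at key
    exact key
end

section
/- (Fundamental theorem for Hopf modules over weak Hopf algebras) Let M be a right H-Hopf module over a weak Hopf algebra H and N = {m ∈ M : ρ(m) = m·1₍₁₎ ⊗ 1₍₂₎} its space of coinvariants. Then the map α: N ⊗_{H_t} H → M, n ⊗ h ↦ n·h, is an isomorphism of right H-Hopf modules, with inverse β(m) = (m₍₀₎·S(m₍₁₎)) ⊗ m₍₂₎. -/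
open TensorProduct

/-!
The inverse is built from `P(m) = m₀·S(m₁)`. The antipode axiom `S(h₁)h₂ = ε_s(h)` together with
the counit gives `α ∘ β = id`. For a coinvariant `n` one has `P(n·g) = n·ε_t(g)`, and with
`ε_t(h₁)h₂ = h` this shows that `β ∘ α` is the identity modulo the `H_t`-balancing relations,
which `α` kills; hence `ker α` is exactly their span. That `P(m)` is coinvariant comes down to the
identity `(1 ⊗ h₁)Δ(S(h₂)) = (S(h) ⊗ 1)Δ(1)`, proved by a chain of rewrites in the convolution
algebra `Hom(H, H ⊗ H)`; the axioms on `Δ(1)` enter through `Δ(ε_t(z)) = (ε_t(z) ⊗ 1)Δ(1)` and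
`Δ(ε_s(z)) = (1 ⊗ ε_s(z))Δ(1)`.
-/

section TensorProductLemmas

open LinearMap Algebra.TensorProduct

variable {k A B M N P Q : Type*} [CommRing k] [Ring A] [Algebra k A] [Ring B] [Algebra k B]
  [AddCommGroup M] [Module k M] [AddCommGroup N] [Module k N] [AddCommGroup P] [Module k P]
  [AddCommGroup Q] [Module k Q]

theorem LinearMap.rTensor_mulRight_apply (a : A) (t : A ⊗[k] B) :
    rTensor B (mulRight k a) t = t * (a ⊗ₜ[k] (1 : B)) := by
  induction t using TensorProduct.induction_on with
  | zero => simp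
  | tmul x y => simp [tmul_mul_tmul]
  | add u v hu hv => simp [add_mul, hu, hv]

theorem LinearMap.lTensor_mulLeft_apply (b : B) (t : A ⊗[k] B) :
    lTensor A (mulLeft k b) t = ((1 : A) ⊗ₜ[k] b) * t := by
  induction t using TensorProduct.induction_on with
  | zero => simp
  | tmul x y => simp [tmul_mul_tmul]
  | add u v hu hv => simp [mul_add, hu, hv]

theorem TensorProduct.lid_rTensor_assoc_mul (φ : A →ₗ[k] k) (u t : A ⊗[k] A) :
    TensorProduct.lid k (A ⊗[k] A)
        (LinearMap.rTensor (A ⊗[k] A) φ (TensorProduct.assoc k A A A (u ⊗ₜ[k] 1) * (1 ⊗ₜ[k] t))) =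
      (TensorProduct.lid k A (LinearMap.rTensor A φ u) ⊗ₜ[k] 1) * t := by
  induction u using TensorProduct.induction_on with
  | zero => simp
  | tmul a b =>
    induction t using TensorProduct.induction_on with
    | zero => simp
    | tmul c d => simp [tmul_mul_tmul, smul_tmul']
    | add p q hp hq => simp only [tmul_add, mul_add, map_add, hp, hq]
  | add p q hp hq => simp [add_tmul, add_mul, hp, hq]

theorem TensorProduct.rid_lTensor_mul_assoc (ψ : A →ₗ[k] k) (u t : A ⊗[k] A) :
    TensorProduct.rid k (A ⊗[k] A) (LinearMap.lTensor (A ⊗[k] A) ψ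
        ((TensorProduct.assoc k A A A).symm
          ((1 ⊗ₜ[k] t) * TensorProduct.assoc k A A A (u ⊗ₜ[k] 1)))) =
      (1 ⊗ₜ[k] TensorProduct.rid k A (LinearMap.lTensor A ψ t)) * u := by
  induction u using TensorProduct.induction_on with
  | zero => simp
  | tmul a b =>
    induction t using TensorProduct.induction_on with
    | zero => simp
    | tmul c d => simp [tmul_mul_tmul, smul_tmul', tmul_smul]
    | add p q hp hq => simp only [tmul_add, add_mul, map_add, hp, hq]
  | add p q hp hq => simp [add_tmul, mul_add, hp, hq]

theorem TensorProduct.lid_rTensor_lTensor (f : M →ₗ[k] N) (φ : P →ₗ[k] k) (t : P ⊗[k] M) :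
    TensorProduct.lid k N (rTensor N φ (lTensor P f t)) =
      f (TensorProduct.lid k M (rTensor M φ t)) := by
  induction t using TensorProduct.induction_on with
  | zero => simp
  | tmul a b => simp
  | add u v hu hv => simp only [map_add, hu, hv]

theorem TensorProduct.rid_lTensor_rTensor (f : M →ₗ[k] N) (φ : P →ₗ[k] k) (t : M ⊗[k] P) :
    TensorProduct.rid k N (lTensor N φ (rTensor P f t)) =
      f (TensorProduct.rid k M (lTensor M φ t)) := by
  induction t using TensorProduct.induction_on with
  | zero => simp
  | tmul a b => simp
  | add u v hu hv => simp only [map_add, hu, hv]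

theorem TensorProduct.rTensor_lift_assoc_symm_tmul (f : M →ₗ[k] N →ₗ[k] P) (m : M)
    (t : N ⊗[k] Q) :
    rTensor Q (lift f) ((TensorProduct.assoc k M N Q).symm (m ⊗ₜ t)) = rTensor Q (f m) t := by
  induction t using TensorProduct.induction_on with
  | zero => simp
  | tmul a b => simp
  | add u v hu hv => simp only [tmul_add, map_add, hu, hv]

end TensorProductLemmas

namespace WeakHopfAlgebra

open LinearMap Algebra.TensorProduct

variable {k H : Type*} [CommRing k] [Ring H] [Algebra k H] (W : WeakHopfAlgebra k H)

section Convolution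

abbrev toCoalgebra : Coalgebra k H where
  comul := W.comul
  counit := W.counit
  coassoc := LinearMap.ext W.coassoc
  rTensor_counit_comp_comul := LinearMap.ext fun h =>
    ((TensorProduct.lid k H).eq_symm_apply.mpr (W.counit_lid h)).trans (lid_symm_apply h)
  lTensor_counit_comp_comul := LinearMap.ext fun h =>
    ((TensorProduct.rid k H).eq_symm_apply.mpr (W.counit_rid h)).trans (rid_symm_apply h)

noncomputable def conv {A : Type*} [Ring A] [Algebra k A] (f g : H →ₗ[k] A) : H →ₗ[k] A :=
  mul' k A ∘ₗ map f g ∘ₗ W.comul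

variable {A B : Type*} [Ring A] [Algebra k A] [Ring B] [Algebra k B]

theorem conv_apply (f g : H →ₗ[k] A) (h : H) :
    W.conv f g h = mul' k A (map f g (W.comul h)) :=
  rfl

theorem conv_assoc (f g r : H →ₗ[k] A) : W.conv (W.conv f g) r = W.conv f (W.conv g r) := by
  let _ : Coalgebra k H := W.toCoalgebra
  exact congrArg WithConv.ofConv
    (mul_assoc (WithConv.toConv f) (WithConv.toConv g) (WithConv.toConv r))

theorem conv_eq_comp_conv {f g : H →ₗ[k] A} (F : B →ₗ[k] A) {f' g' : H →ₗ[k] B}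
    (hF : ∀ x y, f x * g y = F (f' x * g' y)) : W.conv f g = F ∘ₗ W.conv f' g' := by
  ext h
  rw [comp_apply, conv_apply, conv_apply]
  induction W.comul h using TensorProduct.induction_on with
  | zero => simp
  | tmul x y => simp [hF]
  | add u v hu hv => simp only [map_add, hu, hv]

theorem comul_comp_conv (f g : H →ₗ[k] H) :
    W.comul ∘ₗ W.conv f g = W.conv (W.comul ∘ₗ f) (W.comul ∘ₗ g) :=
  (W.conv_eq_comp_conv W.comul fun _ _ => (W.comul_mul _ _).symm).symm

theorem conv_flip_mk_mk :
    W.conv ((TensorProduct.mk k H H).flip 1) (TensorProduct.mk k H H 1) = W.comul := by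
  ext h
  rw [conv_apply]
  induction W.comul h using TensorProduct.induction_on with
  | zero => simp
  | tmul x y => simp [tmul_mul_tmul]
  | add u v hu hv => rw [map_add, map_add, hu, hv]

end Convolution

theorem comul_one_mul (h : H) : W.comul 1 * W.comul h = W.comul h := by
  rw [← W.comul_mul, one_mul]

theorem comul_mul_one (h : H) : W.comul h * W.comul 1 = W.comul h := by
  rw [← W.comul_mul, mul_one]

theorem conv_id_antipode : W.conv LinearMap.id W.antipode = W.εt :=
  LinearMap.ext W.antipode_right

theorem conv_antipode_id : W.conv W.antipode LinearMap.id = W.εs :=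
  LinearMap.ext W.antipode_left

theorem conv_εs_antipode : W.conv W.εs W.antipode = W.antipode := by
  rw [← conv_antipode_id]
  exact LinearMap.ext W.antipode_conv

theorem conv_antipode_εt : W.conv W.antipode W.εt = W.antipode := by
  rw [← conv_id_antipode, ← conv_assoc, conv_antipode_id, conv_εs_antipode]

theorem εt_mul (x y : H) :
    W.εt x * y = TensorProduct.lid k H (rTensor H W.counit (W.comul 1 * (x ⊗ₜ[k] y))) := by
  simp only [εt, comp_apply, LinearEquiv.coe_coe, flip_apply, TensorProduct.mk_apply,
    mulLeft_apply]
  induction W.comul 1 using TensorProduct.induction_on with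
  | zero => simp
  | tmul a b => simp [tmul_mul_tmul]
  | add u v hu hv => simp [add_mul, hu, hv]

theorem mul_εs (x y : H) :
    x * W.εs y = TensorProduct.rid k H (lTensor H W.counit ((x ⊗ₜ[k] y) * W.comul 1)) := by
  simp only [εs, comp_apply, LinearEquiv.coe_coe, TensorProduct.mk_apply, mulRight_apply]
  induction W.comul 1 using TensorProduct.induction_on with
  | zero => simp
  | tmul a b => simp [tmul_mul_tmul]
  | add u v hu hv => simp [mul_add, hu, hv]

theorem conv_εt_id : W.conv W.εt LinearMap.id = LinearMap.id := by
  rw [W.conv_eq_comp_conv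
    ((TensorProduct.lid k H).toLinearMap ∘ₗ rTensor H W.counit ∘ₗ mulLeft k (W.comul 1))
    (f' := (TensorProduct.mk k H H).flip 1) (g' := TensorProduct.mk k H H 1)
    fun x y => by simp [εt_mul, tmul_mul_tmul], conv_flip_mk_mk]
  ext h
  simp [comul_one_mul, W.counit_lid]

theorem conv_id_εs : W.conv LinearMap.id W.εs = LinearMap.id := by
  rw [W.conv_eq_comp_conv
    ((TensorProduct.rid k H).toLinearMap ∘ₗ lTensor H W.counit ∘ₗ mulRight k (W.comul 1))
    (f' := (TensorProduct.mk k H H).flip 1) (g' := TensorProduct.mk k H H 1)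
    fun x y => by simp [mul_εs, tmul_mul_tmul], conv_flip_mk_mk]
  ext h
  simp [comul_mul_one, W.counit_rid]

theorem εt_eq_lid_rTensor (z : H) :
    W.εt z = TensorProduct.lid k H (rTensor H (W.counit ∘ₗ mulRight k z) (W.comul 1)) := by
  rw [rTensor_comp_apply, rTensor_mulRight_apply]
  rfl

theorem εs_eq_rid_lTensor (z : H) :
    W.εs z = TensorProduct.rid k H (lTensor H (W.counit ∘ₗ mulLeft k z) (W.comul 1)) := by
  rw [lTensor_comp_apply, lTensor_mulLeft_apply]
  rfl

theorem comul_εt (z : H) : W.comul (W.εt z) = (W.εt z ⊗ₜ[k] 1) * W.comul 1 := by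
  rw [W.εt_eq_lid_rTensor, ← lid_rTensor_lTensor, W.weak_comul_one_left, lid_rTensor_assoc_mul]

theorem comul_εs (z : H) : W.comul (W.εs z) = (1 ⊗ₜ[k] W.εs z) * W.comul 1 := by
  rw [W.εs_eq_rid_lTensor, ← rid_lTensor_rTensor,
    ← (TensorProduct.assoc k H H H).symm_apply_apply (rTensor H W.comul _), W.coassoc,
    W.weak_comul_one_right, rid_lTensor_mul_assoc]

theorem rTensor_εs_comul (h : H) : rTensor H W.εs (W.comul h) = (1 ⊗ₜ[k] h) * W.comul 1 := by
  set Ψ := lTensor H ((TensorProduct.lid k H).toLinearMap ∘ₗ rTensor H W.counit)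
  have hΨ : ∀ u, Ψ ((1 ⊗ₜ[k] W.comul h) * lTensor H W.comul u) = (1 ⊗ₜ[k] h) * u := by
    intro u
    induction u using TensorProduct.induction_on with
    | zero => simp
    | tmul a b => simp [Ψ, tmul_mul_tmul, ← W.comul_mul, W.counit_lid]
    | add p q hp hq => simp only [map_add, mul_add, hp, hq]
  have hεs : ∀ t, rTensor H W.εs t =
      Ψ ((1 ⊗ₜ[k] t) * TensorProduct.assoc k H H H (W.comul 1 ⊗ₜ[k] 1)) := by
    intro t
    induction t using TensorProduct.induction_on with
    | zero => simp
    | tmul p q =>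
      simp only [rTensor_tmul, εs, comp_apply, LinearEquiv.coe_coe, TensorProduct.mk_apply,
        mulRight_apply]
      induction W.comul 1 using TensorProduct.induction_on with
      | zero => simp
      | tmul a b => simp [Ψ, tmul_mul_tmul, smul_tmul']
      | add u v hu hv => simp only [mul_add, add_tmul, map_add, hu, hv]
    | add p q hp hq => simp only [map_add, tmul_add, add_mul, hp, hq]
  have hΔ : (1 : H) ⊗ₜ[k] W.comul h = (1 ⊗ₜ[k] W.comul h) * (1 ⊗ₜ[k] W.comul 1) := by
    rw [tmul_mul_tmul, one_mul, W.comul_mul_one]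
  rw [hεs, hΔ, mul_assoc, ← W.weak_comul_one_right, hΨ]

theorem conv_flip_mk_comul (f : H →ₗ[k] H) :
    W.conv ((TensorProduct.mk k H H).flip 1 ∘ₗ f) W.comul =
      rTensor H (W.conv f LinearMap.id) ∘ₗ W.comul := by
  have hassoc :
      (mul' k (H ⊗[k] H) ∘ₗ map ((TensorProduct.mk k H H).flip 1 ∘ₗ f) LinearMap.id) ∘ₗ
        (TensorProduct.assoc k H H H).toLinearMap = rTensor H (mul' k H ∘ₗ map f LinearMap.id) :=
    TensorProduct.ext_threefold fun a b c => by simp [tmul_mul_tmul]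
  ext h
  calc W.conv ((TensorProduct.mk k H H).flip 1 ∘ₗ f) W.comul h
      = (mul' k (H ⊗[k] H) ∘ₗ map ((TensorProduct.mk k H H).flip 1 ∘ₗ f) LinearMap.id)
          (lTensor H W.comul (W.comul h)) := by
        rw [conv_apply, comp_apply, map_lTensor, id_comp]
    _ = rTensor H (mul' k H ∘ₗ map f LinearMap.id) (rTensor H W.comul (W.comul h)) := by
      rw [← W.coassoc, ← hassoc]
      rfl
    _ = rTensor H (W.conv f LinearMap.id) (W.comul h) := by
      rw [← rTensor_comp_apply]
      rfl

theorem comul_comp_antipode :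
    W.comul ∘ₗ W.antipode = W.conv (W.comul ∘ₗ W.εs) (W.comul ∘ₗ W.antipode) := by
  rw [← comul_comp_conv, conv_εs_antipode]

theorem conv_mk_comul_εs :
    W.conv (TensorProduct.mk k H H 1) (W.comul ∘ₗ W.εs) =
      mulRight k (W.comul 1) ∘ₗ TensorProduct.mk k H H 1 := by
  rw [W.conv_eq_comp_conv (mulRight k (W.comul 1) ∘ₗ TensorProduct.mk k H H 1)
    (f' := LinearMap.id) (g' := W.εs) fun x y => by simp [comul_εs, ← mul_assoc, tmul_mul_tmul],
    conv_id_εs, comp_id]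

theorem mulRight_comp_mk_eq_conv :
    mulRight k (W.comul 1) ∘ₗ TensorProduct.mk k H H 1 =
      W.conv (mulRight k (W.comul 1) ∘ₗ (TensorProduct.mk k H H).flip 1 ∘ₗ W.antipode)
        W.comul := by
  rw [W.conv_eq_comp_conv LinearMap.id (f' := (TensorProduct.mk k H H).flip 1 ∘ₗ W.antipode)
    (g' := W.comul) fun x y => by simp [mul_assoc, comul_one_mul],
    id_comp, conv_flip_mk_comul, conv_antipode_id]
  ext h
  simp [rTensor_εs_comul]

theorem conv_comul_comul_antipode :
    W.conv W.comul (W.comul ∘ₗ W.antipode) = W.comul ∘ₗ W.εt := by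
  rw [← conv_id_antipode, comul_comp_conv, comp_id]

theorem conv_mulRight_flip_mk_antipode_comul_εt :
    W.conv (mulRight k (W.comul 1) ∘ₗ (TensorProduct.mk k H H).flip 1 ∘ₗ W.antipode)
        (W.comul ∘ₗ W.εt) =
      mulRight k (W.comul 1) ∘ₗ (TensorProduct.mk k H H).flip 1 ∘ₗ W.antipode := by
  rw [W.conv_eq_comp_conv (mulRight k (W.comul 1) ∘ₗ (TensorProduct.mk k H H).flip 1)
    (f' := W.antipode) (g' := W.εt) fun x y => ?_, conv_antipode_εt, comp_assoc]
  simp only [comp_apply, mulRight_apply, flip_apply, TensorProduct.mk_apply]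
  rw [mul_assoc, comul_one_mul, comul_εt, ← mul_assoc, tmul_mul_tmul, mul_one]

theorem conv_mk_comul_antipode :
    W.conv (TensorProduct.mk k H H 1) (W.comul ∘ₗ W.antipode) =
      mulRight k (W.comul 1) ∘ₗ (TensorProduct.mk k H H).flip 1 ∘ₗ W.antipode := by
  rw [comul_comp_antipode, ← conv_assoc, conv_mk_comul_εs, mulRight_comp_mk_eq_conv,
    conv_assoc, conv_comul_comul_antipode, conv_mulRight_flip_mk_antipode_comul_εt]

section HopfModule

variable {M : Type*} [AddCommGroup M] [Module k M]

/-- `(m ⊗ h) ⊗ (a ⊗ b) ↦ m·a ⊗ hb`, the right-hand side of the Hopf module compatibility. -/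
noncomputable def diagAct (act : H →ₗ[k] M →ₗ[k] M) :
    (M ⊗[k] H) ⊗[k] (H ⊗[k] H) →ₗ[k] M ⊗[k] H :=
  map (lift act.flip) (mul' k H) ∘ₗ tensorTensorTensorComm k M H H H

def IsCoinvariant (act : H →ₗ[k] M →ₗ[k] M) (coact : M →ₗ[k] M ⊗[k] H) (m : M) : Prop :=
  coact m = rTensor H (act.flip m) (W.comul 1)

noncomputable def coinvProj (act : H →ₗ[k] M →ₗ[k] M) (coact : M →ₗ[k] M ⊗[k] H) :
    M →ₗ[k] M :=
  lift act.flip ∘ₗ lTensor M W.antipode ∘ₗ coact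

noncomputable def hopfModuleInv (act : H →ₗ[k] M →ₗ[k] M) (coact : M →ₗ[k] M ⊗[k] H) :
    M →ₗ[k] M ⊗[k] H :=
  map (lift act.flip ∘ₗ lTensor M W.antipode) LinearMap.id ∘ₗ
    (TensorProduct.assoc k M H H).symm.toLinearMap ∘ₗ lTensor M W.comul ∘ₗ coact

def balancingRelations (act : H →ₗ[k] M →ₗ[k] M) (N : Submodule k M) :
    Submodule k (N ⊗[k] H) :=
  Submodule.span k
    {x : (↥N) ⊗[k] H | ∃ (n : ↥N) (z h : H) (hm : (act (W.εt z)) (n : M) ∈ N),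
      x = (⟨(act (W.εt z)) (n : M), hm⟩ : ↥N) ⊗ₜ[k] h - n ⊗ₜ[k] (W.εt z * h)}

variable {W} {act : H →ₗ[k] M →ₗ[k] M} {coact : M →ₗ[k] M ⊗[k] H} {N : Submodule k M}

noncomputable def hopfModuleInvCoinv (hP : ∀ m, W.coinvProj act coact m ∈ N) :
    M →ₗ[k] N ⊗[k] H :=
  rTensor H (codRestrict N (W.coinvProj act coact) hP) ∘ₗ coact

theorem act_act (act_mul : ∀ h g : H, act (h * g) = act g ∘ₗ act h) (a c : H) (m : M) :
    act c (act a m) = act (a * c) m := by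
  rw [act_mul]
  rfl

theorem rTensor_flip_act (act_mul : ∀ h g : H, act (h * g) = act g ∘ₗ act h) (z : H) (m : M)
    (t : H ⊗[k] H) :
    rTensor H (act.flip (act z m)) t = rTensor H (act.flip m) ((z ⊗ₜ[k] 1) * t) := by
  induction t using TensorProduct.induction_on with
  | zero => simp
  | tmul a b => simp [tmul_mul_tmul, act_act act_mul]
  | add p q hp hq => simp only [map_add, mul_add, hp, hq]

theorem lift_flip_rTensor_flip (act_mul : ∀ h g : H, act (h * g) = act g ∘ₗ act h) (m : M)
    (t : H ⊗[k] H) : lift act.flip (rTensor H (act.flip m) t) = act (mul' k H t) m := by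
  induction t using TensorProduct.induction_on with
  | zero => simp
  | tmul a b => simp [act_act act_mul]
  | add p q hp hq => simp only [map_add, LinearMap.add_apply, hp, hq]

theorem diagAct_tmul (m : M) (x : H) (v : H ⊗[k] H) :
    diagAct act ((m ⊗ₜ[k] x) ⊗ₜ[k] v) = rTensor H (act.flip m) ((1 ⊗ₜ[k] x) * v) := by
  induction v using TensorProduct.induction_on with
  | zero => simp
  | tmul p q => simp [diagAct, tmul_mul_tmul]
  | add p q hp hq => simp only [tmul_add, mul_add, map_add, hp, hq]

theorem diagAct_rTensor (act_mul : ∀ h g : H, act (h * g) = act g ∘ₗ act h) (m : M)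
    (t u : H ⊗[k] H) :
    diagAct act (rTensor H (act.flip m) t ⊗ₜ[k] u) = rTensor H (act.flip m) (t * u) := by
  induction t using TensorProduct.induction_on with
  | zero => simp
  | tmul a b =>
    rw [rTensor_tmul, flip_apply, diagAct_tmul, rTensor_flip_act act_mul, ← mul_assoc,
      tmul_mul_tmul, mul_one, one_mul]
  | add p q hp hq => simp only [map_add, add_tmul, add_mul, hp, hq]

theorem coact_lift
    (compat : ∀ (m : M) (h : H), coact (act h m) = diagAct act (coact m ⊗ₜ[k] W.comul h))
    (w : M ⊗[k] H) : coact (lift act.flip w) = diagAct act (map coact W.comul w) := by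
  induction w using TensorProduct.induction_on with
  | zero => simp
  | tmul m h => simp [compat]
  | add p q hp hq => simp only [map_add, hp, hq]

theorem IsCoinvariant.coact_act (act_mul : ∀ h g : H, act (h * g) = act g ∘ₗ act h)
    (compat : ∀ (m : M) (h : H), coact (act h m) = diagAct act (coact m ⊗ₜ[k] W.comul h))
    {n : M} (hn : W.IsCoinvariant act coact n) (h : H) :
    coact (act h n) = rTensor H (act.flip n) (W.comul h) := by
  rw [compat, hn, diagAct_rTensor act_mul, comul_one_mul]

theorem IsCoinvariant.coinvProj_act (act_mul : ∀ h g : H, act (h * g) = act g ∘ₗ act h)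
    (compat : ∀ (m : M) (h : H), coact (act h m) = diagAct act (coact m ⊗ₜ[k] W.comul h))
    {n : M} (hn : W.IsCoinvariant act coact n) (g : H) :
    W.coinvProj act coact (act g n) = act (W.εt g) n := by
  have hcomm : lTensor M W.antipode (rTensor H (act.flip n) (W.comul g)) =
      rTensor H (act.flip n) (lTensor H W.antipode (W.comul g)) := by
    rw [← comp_apply, lTensor_comp_rTensor, ← rTensor_comp_lTensor, comp_apply]
  rw [coinvProj, comp_apply, comp_apply, hn.coact_act act_mul compat, hcomm,
    lift_flip_rTensor_flip act_mul, ← conv_id_antipode]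
  rfl

theorem isCoinvariant_coinvProj (act_mul : ∀ h g : H, act (h * g) = act g ∘ₗ act h)
    (compat : ∀ (m : M) (h : H), coact (act h m) = diagAct act (coact m ⊗ₜ[k] W.comul h))
    (coact_coassoc : ∀ m : M,
      TensorProduct.assoc k M H H (rTensor H coact (coact m)) = lTensor M W.comul (coact m))
    (m : M) : W.IsCoinvariant act coact (W.coinvProj act coact m) := by
  set Φ : M ⊗[k] (H ⊗[k] H) →ₗ[k] M ⊗[k] H :=
    rTensor H (lift act.flip) ∘ₗ (TensorProduct.assoc k M H H).symm.toLinearMap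
  have hdiag : diagAct act ∘ₗ lTensor (M ⊗[k] H) (W.comul ∘ₗ W.antipode) =
      Φ ∘ₗ lTensor M (mul' k (H ⊗[k] H) ∘ₗ map (TensorProduct.mk k H H 1) (W.comul ∘ₗ W.antipode))
        ∘ₗ (TensorProduct.assoc k M H H).toLinearMap :=
    TensorProduct.ext_threefold fun m x y => by
      simp [Φ, diagAct_tmul, rTensor_lift_assoc_symm_tmul]
  have hunit : ∀ w : M ⊗[k] H,
      Φ (lTensor M (mulRight k (W.comul 1) ∘ₗ (TensorProduct.mk k H H).flip 1 ∘ₗ W.antipode) w) =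
        rTensor H (act.flip (lift act.flip (lTensor M W.antipode w))) (W.comul 1) := by
    intro w
    induction w using TensorProduct.induction_on with
    | zero => simp
    | tmul m h => simp [Φ, rTensor_lift_assoc_symm_tmul, rTensor_flip_act act_mul]
    | add p q hp hq => simp only [map_add, rTensor_add, LinearMap.add_apply, hp, hq]
  calc coact (W.coinvProj act coact m)
      = diagAct act (map coact W.comul (lTensor M W.antipode (coact m))) := coact_lift compat _
    _ = diagAct act (lTensor (M ⊗[k] H) (W.comul ∘ₗ W.antipode) (rTensor H coact (coact m))) := by
      rw [map_lTensor, ← lTensor_comp_rTensor]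
      rfl
    _ = Φ (lTensor M (mul' k (H ⊗[k] H) ∘ₗ map (TensorProduct.mk k H H 1) (W.comul ∘ₗ W.antipode))
          (lTensor M W.comul (coact m))) := by
      rw [← coact_coassoc]
      exact LinearMap.congr_fun hdiag _
    _ = Φ (lTensor M (mulRight k (W.comul 1) ∘ₗ (TensorProduct.mk k H H).flip 1 ∘ₗ W.antipode)
          (coact m)) := by
      rw [← conv_mk_comul_antipode, ← lTensor_comp_apply]
      rfl
    _ = rTensor H (act.flip (W.coinvProj act coact m)) (W.comul 1) := hunit _

theorem hopfModuleInv_apply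
    (coact_coassoc : ∀ m : M,
      TensorProduct.assoc k M H H (rTensor H coact (coact m)) = lTensor M W.comul (coact m))
    (m : M) : W.hopfModuleInv act coact m = rTensor H (W.coinvProj act coact) (coact m) := by
  rw [hopfModuleInv, comp_apply, comp_apply, comp_apply, ← coact_coassoc, LinearEquiv.coe_coe,
    LinearEquiv.symm_apply_apply, map_rTensor]
  rfl

theorem lift_flip_hopfModuleInv (act_one : act 1 = LinearMap.id)
    (act_mul : ∀ h g : H, act (h * g) = act g ∘ₗ act h)
    (compat : ∀ (m : M) (h : H), coact (act h m) = diagAct act (coact m ⊗ₜ[k] W.comul h))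
    (coact_counit : ∀ m : M, TensorProduct.rid k M (lTensor M W.counit (coact m)) = m)
    (m : M) : lift act.flip (W.hopfModuleInv act coact m) = m := by
  have hεs : ∀ w : M ⊗[k] H,
      lift act.flip (map (lift act.flip ∘ₗ lTensor M W.antipode) LinearMap.id
        ((TensorProduct.assoc k M H H).symm (lTensor M W.comul w))) =
      lift act.flip (lTensor M W.εs w) := by
    intro w
    induction w using TensorProduct.induction_on with
    | zero => simp
    | tmul m h =>
      rw [lTensor_tmul, lTensor_tmul, ← conv_antipode_id, conv_apply]
      induction W.comul h using TensorProduct.induction_on with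
      | zero => simp
      | tmul a b => simp [act_act act_mul]
      | add p q hp hq => simp only [tmul_add, map_add, hp, hq]
    | add p q hp hq => simp only [map_add, hp, hq]
  have hcounit : ∀ w : M ⊗[k] H,
      TensorProduct.rid k M (lTensor M W.counit (diagAct act (w ⊗ₜ[k] W.comul 1))) =
        lift act.flip (lTensor M W.εs w) := by
    intro w
    induction w using TensorProduct.induction_on with
    | zero => simp
    | tmul m x =>
      rw [diagAct_tmul, rid_lTensor_rTensor, lTensor_tmul, lift.tmul, flip_apply]
      rfl
    | add p q hp hq => simp only [add_tmul, map_add, hp, hq]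
  calc lift act.flip (W.hopfModuleInv act coact m)
      = lift act.flip (lTensor M W.εs (coact m)) := hεs _
    _ = TensorProduct.rid k M (lTensor M W.counit (coact (act 1 m))) := by rw [compat, hcounit]
    _ = m := by rw [act_one, LinearMap.id_apply, coact_counit]

theorem lift_flip_comp_subtype_apply (x : N ⊗[k] H) :
    lift (act.flip ∘ₗ N.subtype) x = lift act.flip (map N.subtype LinearMap.id x) := by
  induction x using TensorProduct.induction_on with
  | zero => simp
  | tmul n h => simp
  | add p q hp hq => simp only [map_add, hp, hq]

theorem lift_flip_comp_subtype_lTensor_mulRight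
    (act_mul : ∀ h g : H, act (h * g) = act g ∘ₗ act h) (x : N ⊗[k] H) (g : H) :
    lift (act.flip ∘ₗ N.subtype) (lTensor N (mulRight k g) x) =
      act g (lift (act.flip ∘ₗ N.subtype) x) := by
  induction x using TensorProduct.induction_on with
  | zero => simp
  | tmul n h => simp [act_act act_mul]
  | add p q hp hq => simp only [map_add, hp, hq]

theorem coact_lift_flip_comp_subtype (act_mul : ∀ h g : H, act (h * g) = act g ∘ₗ act h)
    (compat : ∀ (m : M) (h : H), coact (act h m) = diagAct act (coact m ⊗ₜ[k] W.comul h))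
    (hN : ∀ n ∈ N, W.IsCoinvariant act coact n) (x : N ⊗[k] H) :
    coact (lift (act.flip ∘ₗ N.subtype) x) =
      rTensor H (lift (act.flip ∘ₗ N.subtype))
        ((TensorProduct.assoc k N H H).symm (lTensor N W.comul x)) := by
  induction x using TensorProduct.induction_on with
  | zero => simp
  | tmul n h =>
    rw [lTensor_tmul, rTensor_lift_assoc_symm_tmul, lift.tmul, comp_apply, flip_apply,
      Submodule.subtype_apply, (hN n n.2).coact_act act_mul compat]
  | add p q hp hq => simp only [map_add, hp, hq]

theorem map_subtype_hopfModuleInvCoinv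
    (coact_coassoc : ∀ m : M,
      TensorProduct.assoc k M H H (rTensor H coact (coact m)) = lTensor M W.comul (coact m))
    (hP : ∀ m, W.coinvProj act coact m ∈ N) (m : M) :
    map N.subtype LinearMap.id (hopfModuleInvCoinv hP m) = W.hopfModuleInv act coact m := by
  rw [hopfModuleInv_apply coact_coassoc, hopfModuleInvCoinv, comp_apply, map_rTensor,
    subtype_comp_codRestrict]
  rfl

theorem sub_hopfModuleInvCoinv_mem_balancingRelations
    (act_mul : ∀ h g : H, act (h * g) = act g ∘ₗ act h)
    (compat : ∀ (m : M) (h : H), coact (act h m) = diagAct act (coact m ⊗ₜ[k] W.comul h))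
    (hN : ∀ n ∈ N, W.IsCoinvariant act coact n) (hP : ∀ m, W.coinvProj act coact m ∈ N)
    (x : N ⊗[k] H) :
    x - hopfModuleInvCoinv hP (lift (act.flip ∘ₗ N.subtype) x) ∈ W.balancingRelations act N := by
  induction x using TensorProduct.induction_on with
  | zero => simp
  | tmul n h =>
    have hgen : ∀ u : H ⊗[k] H, n ⊗ₜ[k] mul' k H (rTensor H W.εt u) -
        rTensor H (codRestrict N (W.coinvProj act coact) hP ∘ₗ act.flip n) u ∈
          W.balancingRelations act N := by
      intro u
      induction u using TensorProduct.induction_on with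
      | zero => simp
      | tmul c d =>
        have hc : codRestrict N (W.coinvProj act coact) hP (act c n) =
            ⟨act (W.εt c) n, (hN n n.2).coinvProj_act act_mul compat c ▸ hP _⟩ :=
          Subtype.ext ((hN n n.2).coinvProj_act act_mul compat c)
        rw [rTensor_tmul, rTensor_tmul, mul'_apply, comp_apply, flip_apply, hc, ← neg_sub]
        exact neg_mem (Submodule.subset_span ⟨n, c, d, _, rfl⟩)
      | add p q hp hq =>
        rw [map_add, map_add, tmul_add, map_add, add_sub_add_comm]
        exact add_mem hp hq
    have hh := congr(n ⊗ₜ[k] $(LinearMap.congr_fun W.conv_εt_id h))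
    rw [LinearMap.id_apply] at hh
    rw [lift.tmul, comp_apply, flip_apply, Submodule.subtype_apply, hopfModuleInvCoinv, comp_apply,
      (hN n n.2).coact_act act_mul compat, ← rTensor_comp_apply, ← hh]
    exact hgen _
  | add p q hp hq =>
    rw [map_add, map_add, add_sub_add_comm]
    exact add_mem hp hq

theorem ker_lift_flip_comp_subtype (act_mul : ∀ h g : H, act (h * g) = act g ∘ₗ act h)
    (compat : ∀ (m : M) (h : H), coact (act h m) = diagAct act (coact m ⊗ₜ[k] W.comul h))
    (hN : ∀ n ∈ N, W.IsCoinvariant act coact n) (hP : ∀ m, W.coinvProj act coact m ∈ N) :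
    ker (lift (act.flip ∘ₗ N.subtype)) = W.balancingRelations act N := by
  refine le_antisymm (fun x hx => ?_) ?_
  · simpa [mem_ker.1 hx] using sub_hopfModuleInvCoinv_mem_balancingRelations act_mul compat hN hP x
  · rw [balancingRelations, Submodule.span_le]
    rintro _ ⟨n, z, h, hm, rfl⟩
    simp [act_act act_mul]

theorem lift_flip_comp_subtype_hopfModuleInvCoinv (act_one : act 1 = LinearMap.id)
    (act_mul : ∀ h g : H, act (h * g) = act g ∘ₗ act h)
    (compat : ∀ (m : M) (h : H), coact (act h m) = diagAct act (coact m ⊗ₜ[k] W.comul h))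
    (coact_coassoc : ∀ m : M,
      TensorProduct.assoc k M H H (rTensor H coact (coact m)) = lTensor M W.comul (coact m))
    (coact_counit : ∀ m : M, TensorProduct.rid k M (lTensor M W.counit (coact m)) = m)
    (hP : ∀ m, W.coinvProj act coact m ∈ N) (m : M) :
    lift (act.flip ∘ₗ N.subtype) (hopfModuleInvCoinv hP m) = m := by
  rw [lift_flip_comp_subtype_apply, map_subtype_hopfModuleInvCoinv coact_coassoc,
    lift_flip_hopfModuleInv act_one act_mul compat coact_counit]

end HopfModule

end WeakHopfAlgebra

theorem WeakHopfAlgebra.fundamental_theorem_of_hopf_modules_general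
    {k H : Type*} [Field k] [Ring H] [Algebra k H]
    (W : WeakHopfAlgebra k H)
    (M : Type*) [AddCommGroup M] [Module k M]
    -- right action of `H` on `M`
    (act : H →ₗ[k] M →ₗ[k] M)
    (act_one : act 1 = LinearMap.id)
    (act_mul : ∀ h g : H, act (h * g) = (act g) ∘ₗ (act h))
    -- right coaction of `H` on `M`
    (coact : M →ₗ[k] M ⊗[k] H)
    (coact_coassoc : ∀ m : M,
      (TensorProduct.assoc k M H H) ((LinearMap.rTensor H coact) (coact m)) =
        (LinearMap.lTensor M W.comul) (coact m))
    (coact_counit : ∀ m : M,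
      (TensorProduct.rid k M) ((LinearMap.lTensor M W.counit) (coact m)) = m)
    -- Hopf module compatibility: `ρ(m·h) = m₍₀₎·h₍₁₎ ⊗ m₍₁₎h₍₂₎`
    (compat : ∀ (m : M) (h : H),
      coact ((act h) m) =
        (TensorProduct.map (TensorProduct.lift act.flip) (LinearMap.mul' k H))
          ((TensorProduct.tensorTensorTensorComm k M H H H) (coact m ⊗ₜ[k] W.comul h)))
    -- `Ec m = m·1₍₁₎ ⊗ 1₍₂₎`
    (Ec : M →ₗ[k] M ⊗[k] H)
    (hEc : Ec =
      (TensorProduct.map (TensorProduct.lift act.flip) LinearMap.id) ∘ₗ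
        (TensorProduct.assoc k M H H).symm.toLinearMap ∘ₗ
          ((TensorProduct.mk k M (H ⊗[k] H)).flip (W.comul 1)))
    -- the coinvariants `N = {m | ρ(m) = m·1₍₁₎ ⊗ 1₍₂₎}`
    (N : Submodule k M)
    (hN : N = LinearMap.ker (coact - Ec))
    -- `α : N ⊗ H → M, n ⊗ h ↦ n·h`
    (A0 : (↥N) ⊗[k] H →ₗ[k] M)
    (hA0 : A0 = TensorProduct.lift (act.flip ∘ₗ N.subtype))
    -- the `H_t`-balancing relations `(n·z) ⊗ h - n ⊗ (zh)`, `z ∈ H_t`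
    (Q : Submodule k ((↥N) ⊗[k] H))
    (hQ : Q = Submodule.span k
      {x : (↥N) ⊗[k] H | ∃ (n : ↥N) (z h : H) (hm : (act (W.εt z)) (n : M) ∈ N),
        x = (⟨(act (W.εt z)) (n : M), hm⟩ : ↥N) ⊗ₜ[k] h - n ⊗ₜ[k] (W.εt z * h)})
    -- `β(m) = (m₍₀₎·S(m₍₁₎)) ⊗ m₍₂₎`
    (B0 : M →ₗ[k] M ⊗[k] H)
    (hB0 : B0 =
      (TensorProduct.map
          ((TensorProduct.lift act.flip) ∘ₗ (LinearMap.lTensor M W.antipode)) LinearMap.id) ∘ₗ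
        (TensorProduct.assoc k M H H).symm.toLinearMap ∘ₗ
          (LinearMap.lTensor M W.comul) ∘ₗ coact) :
    -- `α` descends to a bijection `N ⊗_{H_t} H → M` ...
    LinearMap.ker A0 = Q ∧
    Function.Surjective A0 ∧
    -- ... which is a morphism of right `H`-modules ...
    (∀ (x : (↥N) ⊗[k] H) (g : H),
      A0 ((LinearMap.lTensor (↥N) (LinearMap.mulRight k g)) x) = (act g) (A0 x)) ∧
    -- ... and of right `H`-comodules ...
    (∀ x : (↥N) ⊗[k] H,
      coact (A0 x) =
        (LinearMap.rTensor H A0)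
          ((TensorProduct.assoc k (↥N) H H).symm ((LinearMap.lTensor (↥N) W.comul) x))) ∧
    -- ... with inverse `β`: `β` takes values in `N ⊗ H` and `α ∘ β = id`.
    (∀ m : M, B0 m ∈ LinearMap.range (TensorProduct.map N.subtype (LinearMap.id : H →ₗ[k] H))) ∧
    (∀ m : M, (TensorProduct.lift act.flip) (B0 m) = m) := by
  have hmem : ∀ m, m ∈ N ↔ W.IsCoinvariant act coact m := fun m => by
    have hEcm : Ec m = LinearMap.rTensor H (act.flip m) (W.comul 1) := by
      subst hEc
      exact TensorProduct.rTensor_lift_assoc_symm_tmul act.flip m (W.comul 1)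
    rw [hN, LinearMap.mem_ker, LinearMap.sub_apply, sub_eq_zero, hEcm]
    rfl
  have hcoinv : ∀ n ∈ N, W.IsCoinvariant act coact n := fun n hn => (hmem n).1 hn
  have hP : ∀ m, W.coinvProj act coact m ∈ N := fun m =>
    (hmem _).2 (isCoinvariant_coinvProj act_mul compat coact_coassoc m)
  subst hA0 hQ hB0
  exact ⟨ker_lift_flip_comp_subtype act_mul compat hcoinv hP,
    fun m => ⟨_, lift_flip_comp_subtype_hopfModuleInvCoinv act_one act_mul compat coact_coassoc
      coact_counit hP m⟩,
    lift_flip_comp_subtype_lTensor_mulRight act_mul,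
    coact_lift_flip_comp_subtype act_mul compat hcoinv,
    fun m => ⟨_, map_subtype_hopfModuleInvCoinv coact_coassoc hP m⟩,
    lift_flip_hopfModuleInv act_one act_mul compat coact_counit⟩

/-- the fundamental theorem for right Hopf modules over a weak Hopf algebra.
`M` is a right `H`-Hopf module (right action `act`, right coaction `coact`, with the
compatibility `ρ(m·h) = m₍₀₎·h₍₁₎ ⊗ m₍₁₎h₍₂₎`).  `N` is the space of coinvariants,
`A0 : N ⊗ H → M, n ⊗ h ↦ n·h`, and `Q` is the submodule of relations defining the
`H_t`-balanced tensor product `N ⊗_{H_t} H`.  The conclusions say that the induced map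
`N ⊗_{H_t} H → M` is a bijective morphism of right Hopf modules whose inverse is
`β(m) = (m₍₀₎·S(m₍₁₎)) ⊗ m₍₂₎`. -/
theorem WeakHopfAlgebra.fundamental_theorem_of_hopf_modules
    {k H : Type*} [Field k] [Ring H] [Algebra k H] [FiniteDimensional k H]
    (W : WeakHopfAlgebra k H)
    (M : Type*) [AddCommGroup M] [Module k M]
    -- right action of `H` on `M`
    (act : H →ₗ[k] M →ₗ[k] M)
    (act_one : act 1 = LinearMap.id)
    (act_mul : ∀ h g : H, act (h * g) = (act g) ∘ₗ (act h))
    -- right coaction of `H` on `M`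
    (coact : M →ₗ[k] M ⊗[k] H)
    (coact_coassoc : ∀ m : M,
      (TensorProduct.assoc k M H H) ((LinearMap.rTensor H coact) (coact m)) =
        (LinearMap.lTensor M W.comul) (coact m))
    (coact_counit : ∀ m : M,
      (TensorProduct.rid k M) ((LinearMap.lTensor M W.counit) (coact m)) = m)
    -- Hopf module compatibility: `ρ(m·h) = m₍₀₎·h₍₁₎ ⊗ m₍₁₎h₍₂₎`
    (compat : ∀ (m : M) (h : H),
      coact ((act h) m) =
        (TensorProduct.map (TensorProduct.lift act.flip) (LinearMap.mul' k H))
          ((TensorProduct.tensorTensorTensorComm k M H H H) (coact m ⊗ₜ[k] W.comul h)))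
    -- `Ec m = m·1₍₁₎ ⊗ 1₍₂₎`
    (Ec : M →ₗ[k] M ⊗[k] H)
    (hEc : Ec =
      (TensorProduct.map (TensorProduct.lift act.flip) LinearMap.id) ∘ₗ
        (TensorProduct.assoc k M H H).symm.toLinearMap ∘ₗ
          ((TensorProduct.mk k M (H ⊗[k] H)).flip (W.comul 1)))
    -- the coinvariants `N = {m | ρ(m) = m·1₍₁₎ ⊗ 1₍₂₎}`
    (N : Submodule k M)
    (hN : N = LinearMap.ker (coact - Ec))
    -- `α : N ⊗ H → M, n ⊗ h ↦ n·h`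
    (A0 : (↥N) ⊗[k] H →ₗ[k] M)
    (hA0 : A0 = TensorProduct.lift (act.flip ∘ₗ N.subtype))
    -- the `H_t`-balancing relations `(n·z) ⊗ h - n ⊗ (zh)`, `z ∈ H_t`
    (Q : Submodule k ((↥N) ⊗[k] H))
    (hQ : Q = Submodule.span k
      {x : (↥N) ⊗[k] H | ∃ (n : ↥N) (z h : H) (hm : (act (W.εt z)) (n : M) ∈ N),
        x = (⟨(act (W.εt z)) (n : M), hm⟩ : ↥N) ⊗ₜ[k] h - n ⊗ₜ[k] (W.εt z * h)})
    -- `β(m) = (m₍₀₎·S(m₍₁₎)) ⊗ m₍₂₎`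
    (B0 : M →ₗ[k] M ⊗[k] H)
    (hB0 : B0 =
      (TensorProduct.map
          ((TensorProduct.lift act.flip) ∘ₗ (LinearMap.lTensor M W.antipode)) LinearMap.id) ∘ₗ
        (TensorProduct.assoc k M H H).symm.toLinearMap ∘ₗ
          (LinearMap.lTensor M W.comul) ∘ₗ coact) :
    -- `α` descends to a bijection `N ⊗_{H_t} H → M` ...
    LinearMap.ker A0 = Q ∧
    Function.Surjective A0 ∧
    -- ... which is a morphism of right `H`-modules ...
    (∀ (x : (↥N) ⊗[k] H) (g : H),
      A0 ((LinearMap.lTensor (↥N) (LinearMap.mulRight k g)) x) = (act g) (A0 x)) ∧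
    -- ... and of right `H`-comodules ...
    (∀ x : (↥N) ⊗[k] H,
      coact (A0 x) =
        (LinearMap.rTensor H A0)
          ((TensorProduct.assoc k (↥N) H H).symm ((LinearMap.lTensor (↥N) W.comul) x))) ∧
    -- ... with inverse `β`: `β` takes values in `N ⊗ H` and `α ∘ β = id`.
    (∀ m : M, B0 m ∈ LinearMap.range (TensorProduct.map N.subtype (LinearMap.id : H →ₗ[k] H))) ∧
    (∀ m : M, (TensorProduct.lift act.flip) (B0 m) = m) :=
  WeakHopfAlgebra.fundamental_theorem_of_hopf_modules_general W M act act_one act_mul coact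
    coact_coassoc coact_counit compat Ec hEc N hN A0 hA0 Q hQ B0 hB0
end
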